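/- Let A be a primitive nonnegative integer matrix with Perron eigenvalue λ_A. Then for all pairs of index pairs (i,j) and (p,q), the ratio log(A^k_{i,j}!) / log(A^k_{p,q}!) converges as k → ∞ to (vu)_{i,j}/(vu)_{p,q}, where vu is the normalized Perron projection. Consequently there exist K ∈ ℕ and constants 0 < C ≤ 1 ≤ D such that for all k ≥ K and all i,j,p,q: C ≤ log((1/2)·A^k_{i,j}!) / log((1/2)·A^k_{p,q}!) ≤ D. -/

import Mathlib

/-!
Put `P a b = A a b * v b / (λ * v a)`, the Doob transform of `A` along its right Perron vector:
`P` is row-stochastic, some power of `P` is positive, and `π = u * v` is a stationary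
distribution. A stochastic matrix whose entries are all `≥ θ` shrinks the spread `max - min` of
every vector by the factor `1 - θ` (Doeblin), so each column of `Pⁿ` flattens to a constant,
which must be its `π`-average `π b`. Undoing the transform, `Aᵏ i j / λᵏ → v i * u j`: the
entries of `Aᵏ` tend to infinity, with ratios tending to `(v i * u j) / (v p * u q)`.
Finally `log n! ~ n log n` (also for `log (n! / 2)`), and `log a ~ log b` when `a / b` has a
positive limit, so the log-factorial ratios have the same limits; as there are finitely many
index quadruples, they are eventually bounded away from `0` and `∞` uniformly.
-/

open Filter Matrix Nat Asymptotics Topology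

theorem isEquivalent_log_factorial :
    (fun n : ℕ => Real.log n !) ~[atTop] fun n => n * Real.log n := by
  have hbound : ∀ n : ℕ, |Real.log n ! - n * Real.log n| ≤ n := by
    intro n
    have hupper : Real.log n ! ≤ n * Real.log n := by
      rw [← Real.log_pow]
      exact Real.log_le_log (by positivity) (by exact_mod_cast n.factorial_le_pow)
    rcases eq_or_ne n 0 with rfl | hn
    · simp
    have hstirling := Stirling.le_log_factorial_stirling hn
    have hlog : 0 ≤ Real.log n := Real.log_natCast_nonneg n
    have hlog2pi : 0 ≤ Real.log (2 * Real.pi) := Real.log_nonneg (by linarith [Real.pi_gt_three])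
    rw [abs_le]
    constructor <;> linarith
  have hlog : Tendsto (fun n : ℕ => ‖Real.log n‖) atTop atTop :=
    tendsto_norm_atTop_atTop.comp (Real.tendsto_log_atTop.comp tendsto_natCast_atTop_atTop)
  refine IsLittleO.isEquivalent (IsBigO.trans_isLittleO (g := fun n : ℕ => (n : ℝ)) ?_ ?_)
  · exact IsBigO.of_bound 1 (Eventually.of_forall fun n => by simpa using hbound n)
  · simpa using (isBigO_refl (fun n : ℕ => (n : ℝ)) atTop).mul_isLittleO
      ((isLittleO_one_left_iff ℝ).2 hlog)

theorem tendsto_natCast_mul_log_atTop :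
    Tendsto (fun n : ℕ => n * Real.log n) atTop atTop :=
  tendsto_natCast_atTop_atTop.atTop_mul_atTop₀
    (Real.tendsto_log_atTop.comp tendsto_natCast_atTop_atTop)

theorem isEquivalent_log_half_factorial :
    (fun n : ℕ => Real.log (1 / 2 * n !)) ~[atTop] fun n => n * Real.log n := by
  have hshift : (fun n : ℕ => Real.log (1 / 2 * n !)) = fun n => Real.log n ! - Real.log 2 := by
    ext n
    rw [Real.log_mul (by norm_num) (by positivity), one_div, Real.log_inv]
    ring
  rw [hshift]
  exact isEquivalent_log_factorial.sub_isLittleO (isLittleO_const_left.2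
    (Or.inr (tendsto_norm_atTop_atTop.comp tendsto_natCast_mul_log_atTop)))

theorem isEquivalent_log_of_tendsto_div {α : Type*} {l : Filter α} {f g : α → ℝ} {c : ℝ}
    (hc : 0 < c) (hfg : Tendsto (fun x => f x / g x) l (𝓝 c)) (hg : Tendsto g l atTop) :
    (fun x => Real.log (f x)) ~[l] fun x => Real.log (g x) := by
  refine IsLittleO.isEquivalent ?_
  have hlog_div : (fun x => Real.log (f x / g x)) =ᶠ[l]
      (fun x => Real.log (f x)) - fun x => Real.log (g x) := by
    filter_upwards [hfg.eventually_ne hc.ne', hg.eventually_ne_atTop 0] with x hfx hgx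
    exact Real.log_div (left_ne_zero_of_mul (by simpa [div_eq_mul_inv] using hfx)) hgx
  exact (((hfg.log hc.ne').isBigO_one ℝ).congr' hlog_div EventuallyEq.rfl).trans_isLittleO
    ((isLittleO_one_left_iff ℝ).2 (tendsto_norm_atTop_atTop.comp (Real.tendsto_log_atTop.comp hg)))

theorem tendsto_div_of_isEquivalent_mul_log {F : ℕ → ℝ}
    (hF : F ~[atTop] fun n => n * Real.log n) {a b : ℕ → ℕ}
    (ha : Tendsto a atTop atTop) (hb : Tendsto b atTop atTop) {c : ℝ} (hc : 0 < c)
    (hab : Tendsto (fun k => (a k : ℝ) / b k) atTop (𝓝 c)) :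
    Tendsto (fun k => F (a k) / F (b k)) atTop (𝓝 c) := by
  have hb' : Tendsto (fun k => (b k : ℝ)) atTop atTop := tendsto_natCast_atTop_atTop.comp hb
  have hlog : (fun k => Real.log (a k)) ~[atTop] fun k => Real.log (b k) :=
    isEquivalent_log_of_tendsto_div hc hab hb'
  have hcancel : (fun k => a k * Real.log (b k) / (b k * Real.log (b k))) =ᶠ[atTop]
      fun k => (a k : ℝ) / b k := by
    filter_upwards [(Real.tendsto_log_atTop.comp hb').eventually_ne_atTop 0] with k hk
    exact mul_div_mul_right _ _ hk
  have hequiv : (fun k => F (a k) / F (b k)) ~[atTop] fun k => (a k : ℝ) / b k :=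
    (((hF.comp_tendsto ha).div (hF.comp_tendsto hb)).trans
      ((IsEquivalent.refl.mul hlog).div IsEquivalent.refl)).congr_right hcancel
  exact hequiv.symm.tendsto_nhds hab

namespace Matrix

section Spread

variable {ι : Type*} [Fintype ι]

noncomputable def spread (g : ι → ℝ) : ℝ := (⨆ a, g a) - ⨅ a, g a

theorem spread_nonneg [Nonempty ι] (g : ι → ℝ) : 0 ≤ spread g :=
  sub_nonneg.2 (ciInf_le_ciSup (Finite.bddBelow_range g) (Finite.bddAbove_range g))

theorem apply_mem_Icc_iInf_iSup (g : ι → ℝ) (a : ι) : g a ∈ Set.Icc (⨅ a, g a) (⨆ a, g a) :=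
  ⟨ciInf_le (Finite.bddBelow_range g) a, le_ciSup (Finite.bddAbove_range g) a⟩

theorem sum_mul_mem_Icc_iInf_iSup {w : ι → ℝ} (hw : ∀ a, 0 ≤ w a) (hw1 : ∑ a, w a = 1)
    (g : ι → ℝ) : ∑ a, w a * g a ∈ Set.Icc (⨅ a, g a) (⨆ a, g a) := by
  have hconst : ∀ m : ℝ, ∑ a, w a * m = m := fun m => by rw [← Finset.sum_mul, hw1, one_mul]
  constructor
  · calc ⨅ a, g a = ∑ a, w a * ⨅ a, g a := (hconst _).symm
      _ ≤ ∑ a, w a * g a := Finset.sum_le_sum fun a _ =>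
          mul_le_mul_of_nonneg_left (apply_mem_Icc_iInf_iSup g a).1 (hw a)
  · calc ∑ a, w a * g a ≤ ∑ a, w a * ⨆ a, g a := Finset.sum_le_sum fun a _ =>
          mul_le_mul_of_nonneg_left (apply_mem_Icc_iInf_iSup g a).2 (hw a)
      _ = ⨆ a, g a := hconst _

variable [DecidableEq ι] {P : Matrix ι ι ℝ}

theorem mulVec_apply_mem_Icc_iInf_iSup (hP : P ∈ rowStochastic ℝ ι) (g : ι → ℝ) (a : ι) :
    (P *ᵥ g) a ∈ Set.Icc (⨅ b, g b) (⨆ b, g b) :=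
  sum_mul_mem_Icc_iInf_iSup (fun b => hP.1 a b) (sum_row_of_mem_rowStochastic hP a) g

theorem spread_mulVec_le [Nonempty ι] (hP : P ∈ rowStochastic ℝ ι) {θ : ℝ}
    (hθ : ∀ a b, θ ≤ P a b) (g : ι → ℝ) : spread (P *ᵥ g) ≤ (1 - θ) * spread g := by
  obtain ⟨b₀, hb₀⟩ := exists_eq_ciInf_of_finite (f := g)
  set M := ⨆ b, g b
  set m := ⨅ b, g b
  have hgM : ∀ b, g b ≤ M := le_ciSup (Finite.bddAbove_range g)
  have hupper : ∀ a, (P *ᵥ g) a ≤ M - θ * (M - m) := by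
    intro a
    have hdeficit : ∑ b, P a b * (M - g b) = M - (P *ᵥ g) a := by
      simp only [mul_sub, Finset.sum_sub_distrib, ← Finset.sum_mul,
        sum_row_of_mem_rowStochastic hP, one_mul]
      rfl
    have hb₀_term : θ * (M - m) ≤ P a b₀ * (M - g b₀) := by
      rw [hb₀]
      exact mul_le_mul_of_nonneg_right (hθ a b₀) (sub_nonneg.2 (hb₀ ▸ hgM b₀))
    have hsingle : P a b₀ * (M - g b₀) ≤ ∑ b, P a b * (M - g b) :=
      Finset.single_le_sum (fun b _ => mul_nonneg (hP.1 a b) (sub_nonneg.2 (hgM b)))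
        (Finset.mem_univ b₀)
    linarith
  have hsup : ⨆ a, (P *ᵥ g) a ≤ M - θ * (M - m) := ciSup_le hupper
  have hinf : m ≤ ⨅ a, (P *ᵥ g) a :=
    le_ciInf fun a => (mulVec_apply_mem_Icc_iInf_iSup hP g a).1
  rw [spread, spread]
  linarith

theorem tendsto_spread_pow_mulVec [Nonempty ι] (hP : P ∈ rowStochastic ℝ ι) {K : ℕ}
    (hK : ∀ a b, 0 < (P ^ K) a b) (g : ι → ℝ) :
    Tendsto (fun n => spread (P ^ n *ᵥ g)) atTop (𝓝 0) := by
  obtain ⟨θ, hθ, hθK⟩ : ∃ θ > 0, ∀ a b, θ ≤ (P ^ K) a b := by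
    obtain ⟨p, hp⟩ := Finite.exists_min fun p : ι × ι => (P ^ K) p.1 p.2
    exact ⟨_, hK p.1 p.2, fun a b => hp (a, b)⟩
  set s := fun n => spread (P ^ n *ᵥ g)
  have hstep : ∀ n k {θ : ℝ}, (∀ a b, θ ≤ (P ^ k) a b) → s (n + k) ≤ (1 - θ) * s n := by
    intro n k θ hθ
    simp only [s, add_comm n k, pow_add, ← mulVec_mulVec]
    exact spread_mulVec_le (pow_mem hP k) hθ _
  have hanti : Antitone s := antitone_nat_of_succ_le fun n => by
    simpa using hstep n 1 (θ := 0) (by simpa using hP.1)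
  have hs : Tendsto s atTop (𝓝 (⨅ n, s n)) :=
    tendsto_atTop_ciInf hanti ⟨0, by rintro _ ⟨n, rfl⟩; exact spread_nonneg _⟩
  have hlim_nonneg : 0 ≤ ⨅ n, s n := ge_of_tendsto' hs fun n => spread_nonneg _
  have hlim_contract : ⨅ n, s n ≤ (1 - θ) * ⨅ n, s n :=
    le_of_tendsto_of_tendsto' (hs.comp (tendsto_add_atTop_nat K)) (hs.const_mul _)
      fun n => hstep n K hθK
  have hlim_zero : ⨅ n, s n = 0 := by nlinarith
  rwa [hlim_zero] at hs

theorem vecMul_pow_eq_self {π : ι → ℝ} (hπ : π ᵥ* P = π) (n : ℕ) : π ᵥ* P ^ n = π := by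
  induction n with
  | zero => simp
  | succ n ih => rw [pow_succ, ← vecMul_vecMul, ih, hπ]

theorem tendsto_pow_apply_of_mem_rowStochastic (hP : P ∈ rowStochastic ℝ ι) {K : ℕ}
    (hK : ∀ a b, 0 < (P ^ K) a b) {π : ι → ℝ} (hπ0 : ∀ a, 0 ≤ π a) (hπ1 : ∑ a, π a = 1)
    (hπ : π ᵥ* P = π) (a b : ι) : Tendsto (fun n => (P ^ n) a b) atTop (𝓝 (π b)) := by
  have : Nonempty ι := ⟨a⟩
  have hcol : ∀ n, P ^ n *ᵥ Pi.single b 1 = fun c => (P ^ n) c b := fun n => mulVec_single_one _ _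
  have hdist : ∀ n, dist ((P ^ n) a b) (π b) ≤ spread (P ^ n *ᵥ Pi.single b 1) := by
    intro n
    have hπb : π b = ∑ c, π c * (P ^ n) c b := by
      conv_lhs => rw [← vecMul_pow_eq_self hπ n]
      rfl
    rw [hcol, hπb]
    exact Real.dist_le_of_mem_Icc (apply_mem_Icc_iInf_iSup (fun c => (P ^ n) c b) a)
      (sum_mul_mem_Icc_iInf_iSup hπ0 hπ1 _)
  exact tendsto_iff_dist_tendsto_zero.2
    (squeeze_zero (fun n => dist_nonneg) hdist (tendsto_spread_pow_mulVec hP hK _))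

end Spread

section Doob

variable {ι : Type*}

noncomputable def doobTransform (B : Matrix ι ι ℝ) (lam : ℝ) (h : ι → ℝ) : Matrix ι ι ℝ :=
  of fun a b => B a b * h b / (lam * h a)

@[simp]
theorem doobTransform_apply (B : Matrix ι ι ℝ) (lam : ℝ) (h : ι → ℝ) (a b : ι) :
    doobTransform B lam h a b = B a b * h b / (lam * h a) := rfl

variable [Fintype ι] {B : Matrix ι ι ℝ} {lam : ℝ} {h : ι → ℝ}

theorem vecMul_doobTransform (hlam : lam ≠ 0) (hh : ∀ a, h a ≠ 0) {u : ι → ℝ}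
    (huB : u ᵥ* B = lam • u) : (u * h) ᵥ* doobTransform B lam h = u * h := by
  ext b
  have hcol : ∑ a, u a * B a b = lam * u b := congrFun huB b
  calc ((u * h) ᵥ* doobTransform B lam h) b = (∑ a, u a * B a b) * h b / lam := by
        simp only [vecMul, dotProduct, doobTransform_apply, Pi.mul_apply, Finset.sum_mul,
          Finset.sum_div]
        refine Finset.sum_congr rfl fun a _ => ?_
        field_simp [hh a]
    _ = (u * h) b := by rw [hcol, Pi.mul_apply]; field_simp

variable [DecidableEq ι]

theorem doobTransform_pow (hlam : lam ≠ 0) (hh : ∀ a, h a ≠ 0) (n : ℕ) :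
    doobTransform B lam h ^ n = doobTransform (B ^ n) (lam ^ n) h := by
  induction n with
  | zero =>
    ext a b
    by_cases hab : a = b
    · simp [hab, hh]
    · simp [hab]
  | succ n ih =>
    ext a b
    simp only [pow_succ, ih, mul_apply, doobTransform_apply, Finset.sum_div, Finset.sum_mul]
    refine Finset.sum_congr rfl fun c _ => ?_
    field_simp [hh a, hh c]

theorem doobTransform_mem_rowStochastic (hB : ∀ a b, 0 ≤ B a b) (hlam : 0 < lam)
    (hh : ∀ a, 0 < h a) (hBh : B *ᵥ h = lam • h) :
    doobTransform B lam h ∈ rowStochastic ℝ ι := by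
  refine mem_rowStochastic_iff_sum.2 ⟨fun a b => ?_, fun a => ?_⟩
  · have := hB a b; have := hh a; have := hh b
    simp only [doobTransform_apply]
    positivity
  · have hrow : ∑ b, B a b * h b = lam * h a := congrFun hBh a
    have := (hh a).ne'
    simp only [doobTransform_apply, ← Finset.sum_div, hrow]
    field_simp

theorem tendsto_pow_apply_div_pow (hB : ∀ a b, 0 ≤ B a b) {K : ℕ}
    (hK : ∀ a b, 0 < (B ^ K) a b) (hlam : 0 < lam) {u v : ι → ℝ}
    (hu : ∀ a, 0 ≤ u a) (hv : ∀ a, 0 < v a) (hleft : u ᵥ* B = lam • u)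
    (hright : B *ᵥ v = lam • v) (hnorm : ∑ a, u a * v a = 1) (i j : ι) :
    Tendsto (fun n => (B ^ n) i j / lam ^ n) atTop (𝓝 (v i * u j)) := by
  have hv0 : ∀ a, v a ≠ 0 := fun a => (hv a).ne'
  have hpow : ∀ n a b, (doobTransform B lam v ^ n) a b = (B ^ n) a b * v b / (lam ^ n * v a) :=
    fun n a b => by rw [doobTransform_pow hlam.ne' hv0, doobTransform_apply]
  have hPK : ∀ a b, 0 < (doobTransform B lam v ^ K) a b := fun a b => by
    have := hK a b; have := hv a; have := hv b
    rw [hpow]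
    positivity
  have hlim := (tendsto_pow_apply_of_mem_rowStochastic
    (doobTransform_mem_rowStochastic hB hlam hv hright) hPK (π := u * v)
    (fun a => mul_nonneg (hu a) (hv a).le) hnorm (vecMul_doobTransform hlam.ne' hv0 hleft)
    i j).mul_const (v i / v j)
  convert hlim using 2 with n
  · rw [hpow]
    field_simp [hv0 i, hv0 j]
  · simp only [Pi.mul_apply]
    field_simp [hv0 j]

end Doob

end Matrix

theorem tendsto_atTop_of_tendsto_div_pow {f : ℕ → ℕ} {lam c : ℝ} (hlam : 1 < lam) (hc : 0 < c)
    (hf : Tendsto (fun n => (f n : ℝ) / lam ^ n) atTop (𝓝 c)) : Tendsto f atTop atTop := by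
  refine tendsto_natCast_atTop_iff.1 ((hf.pos_mul_atTop hc
    (tendsto_pow_atTop_atTop_of_one_lt hlam)).congr fun n => ?_)
  have : lam ^ n ≠ 0 := by positivity
  field_simp

theorem exists_forall_mem_Icc_of_tendsto {ι : Type*} [Finite ι] {f : ι → ℕ → ℝ} {c : ι → ℝ}
    (hc : ∀ t, 0 < c t) (hf : ∀ t, Tendsto (f t) atTop (𝓝 (c t))) :
    ∃ (K : ℕ) (C D : ℝ), 0 < C ∧ C ≤ 1 ∧ 1 ≤ D ∧
      ∀ k, K ≤ k → ∀ t, f t k ∈ Set.Icc C D := by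
  obtain ⟨C, hC, hC0⟩ : ∃ C : ℝ, (∀ t, C < c t) ∧ 0 < C :=
    ((eventually_all.2 fun t => nhdsWithin_le_nhds (eventually_lt_nhds (hc t))).and
      self_mem_nhdsWithin).exists (f := 𝓝[>] (0 : ℝ))
  obtain ⟨D, hD⟩ : ∃ D : ℝ, ∀ t, c t < D :=
    (eventually_all.2 fun t => eventually_gt_atTop (c t)).exists
  obtain ⟨K, hK⟩ := eventually_atTop.1 <| eventually_all.2 fun t =>
    ((hf t).eventually (eventually_gt_nhds (hC t))).and
      ((hf t).eventually (eventually_lt_nhds (hD t)))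
  refine ⟨K, min C 1, max D 1, lt_min hC0 one_pos, min_le_right _ _, le_max_right _ _,
    fun k hk t => ⟨(min_le_left _ _).trans (hK k hk t).1.le,
      (hK k hk t).2.le.trans (le_max_left _ _)⟩⟩

/-- Let `A` be a primitive `r × r` nonnegative integer matrix with Perron eigenvalue
`λ` and positive left/right eigenvectors `u, v` normalized so `uv = 1`.  Then
`log(A^k_{i,j}!) / log(A^k_{p,q}!) → (vu)_{i,j} / (vu)_{p,q}` as `k → ∞`, and
consequently there exist `K ∈ ℕ` and constants `0 < C ≤ 1 ≤ D` such that for all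
`k ≥ K` and all `i, j, p, q`,
`C ≤ log((1/2)·A^k_{i,j}!) / log((1/2)·A^k_{p,q}!) ≤ D`. -/
theorem log_factorial_entry_ratio_perron
    {r : ℕ} (A : Matrix (Fin r) (Fin r) ℕ)
    (hPrim : ∃ K : ℕ, ∀ i j, 0 < (A ^ K) i j)
    (lam : ℝ) (hlam : 1 < lam)
    (u v : Fin r → ℝ) (hu : ∀ i, 0 < u i) (hv : ∀ i, 0 < v i)
    (hleft : u ᵥ* (A.map (Nat.cast : ℕ → ℝ)) = lam • u)
    (hright : (A.map (Nat.cast : ℕ → ℝ)) *ᵥ v = lam • v)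
    (hnorm : ∑ i, u i * v i = 1) :
    (∀ i j p q : Fin r,
      Tendsto (fun k : ℕ =>
          Real.log (Nat.factorial ((A ^ k) i j)) / Real.log (Nat.factorial ((A ^ k) p q)))
        atTop (nhds ((v i * u j) / (v p * u q)))) ∧
    (∃ (K : ℕ) (C D : ℝ), 0 < C ∧ C ≤ 1 ∧ 1 ≤ D ∧
      ∀ k : ℕ, K ≤ k → ∀ i j p q : Fin r,
        C ≤ Real.log ((1 / 2 : ℝ) * (Nat.factorial ((A ^ k) i j) : ℝ)) /
              Real.log ((1 / 2 : ℝ) * (Nat.factorial ((A ^ k) p q) : ℝ)) ∧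
          Real.log ((1 / 2 : ℝ) * (Nat.factorial ((A ^ k) i j) : ℝ)) /
              Real.log ((1 / 2 : ℝ) * (Nat.factorial ((A ^ k) p q) : ℝ)) ≤ D) := by
  obtain ⟨K, hK⟩ := hPrim
  have hcast : ∀ k i j, ((A.map (Nat.cast : ℕ → ℝ)) ^ k) i j = (A ^ k) i j := fun k i j => by
    rw [← Nat.coe_castRingHom, ← Matrix.map_pow]
    rfl
  have hlim : ∀ i j, Tendsto (fun k => ((A ^ k) i j : ℝ) / lam ^ k) atTop (𝓝 (v i * u j)) := by
    intro i j
    simpa only [hcast] using tendsto_pow_apply_div_pow (fun a b => by simp) (K := K)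
      (fun a b => by simpa [hcast] using hK a b) (by linarith) (fun a => (hu a).le) hv hleft
      hright hnorm i j
  have hpos : ∀ i j, 0 < v i * u j := fun i j => mul_pos (hv i) (hu j)
  have htop : ∀ i j, Tendsto (fun k => (A ^ k) i j) atTop atTop := fun i j =>
    tendsto_atTop_of_tendsto_div_pow hlam (hpos i j) (hlim i j)
  have hratio (F : ℕ → ℝ) (hF : F ~[atTop] fun n => n * Real.log n) (i j p q : Fin r) :
      Tendsto (fun k => F ((A ^ k) i j) / F ((A ^ k) p q)) atTop
        (𝓝 (v i * u j / (v p * u q))) :=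
    tendsto_div_of_isEquivalent_mul_log hF (htop i j) (htop p q) (div_pos (hpos i j) (hpos p q))
      (((hlim i j).div (hlim p q) (hpos p q).ne').congr fun k =>
        div_div_div_cancel_right₀ (pow_ne_zero k (by positivity)) _ _)
  obtain ⟨K', C, D, hC, hC1, hD, hbounds⟩ := exists_forall_mem_Icc_of_tendsto
    (f := fun (t : Fin r × Fin r × Fin r × Fin r) k =>
      Real.log (1 / 2 * ((A ^ k) t.1 t.2.1)! ) / Real.log (1 / 2 * ((A ^ k) t.2.2.1 t.2.2.2)!))
    (fun t => div_pos (hpos _ _) (hpos _ _))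
    (fun t => hratio _ isEquivalent_log_half_factorial _ _ _ _)
  exact ⟨hratio _ isEquivalent_log_factorial, K', C, D, hC, hC1, hD,
    fun k hk i j p q => hbounds k hk (i, j, p, q)⟩
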